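/- Let θ₂ : π → W be a 2-truncated expansion and let φ, ψ ∈ Aut(π) both satisfy the invariance condition (|φ| ⊗ |φ|)(I₂) ⊆ I₂, (|ψ| ⊗ |ψ|)(I₂) ⊆ I₂, and assume moreover (|φ⁻¹| ⊗ |φ⁻¹|)(I₂) ⊆ I₂. Then τ₁^θ(φ ∘ ψ) = τ₁^θ(φ) + |φ|_W ∘ τ₁^θ(ψ) ∘ |φ|⁻¹ as linear maps H → W. That is, τ₁^θ is a 1-cocycle (crossed homomorphism) on the group of I₂-preserving automorphisms of π with coefficients in Hom_ℝ(H, W), where φ acts on f ∈ Hom_ℝ(H, W) by f ↦ |φ|_W ∘ f ∘ |φ|⁻¹. (First assertion of the paper's Proposition 2.4, in truncated form.) -/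

import Mathlib

open scoped TensorProduct

/-- `H := ℝ ⊗_ℤ π^ab`. -/
abbrev HH (π : Type*) [Group π] := TensorProduct ℤ ℝ (Additive (Abelianization π))

/-- `[g] := 1 ⊗ (class of g) ∈ H`. -/
noncomputable def cl {π : Type*} [Group π] (g : π) : HH π :=
  (1 : ℝ) ⊗ₜ[ℤ] (Additive.ofMul (Abelianization.of g))

/-- `|φ| : H → H`, the `ℝ`-linear map induced by `φ ∈ Aut(π)`. -/
noncomputable def indH {π : Type*} [Group π] (φ : MulAut π) : HH π →ₗ[ℝ] HH π :=
  LinearMap.baseChange ℝ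
    ((MonoidHom.toAdditive (Abelianization.map φ.toMonoidHom)).toIntLinearMap)

/-- `|φ|_W : W → W`, the map induced by `|φ| ⊗ |φ|` on `W = (H ⊗_ℝ H) ⧸ I₂`, given that
`(|φ| ⊗ |φ|)(I₂) ⊆ I₂`. -/
noncomputable def indW {π : Type*} [Group π] (I₂ : Submodule ℝ (HH π ⊗[ℝ] HH π))
    (φ : MulAut π)
    (hφ : Submodule.map (TensorProduct.map (indH φ) (indH φ)) I₂ ≤ I₂) :
    ((HH π ⊗[ℝ] HH π) ⧸ I₂) →ₗ[ℝ] ((HH π ⊗[ℝ] HH π) ⧸ I₂) :=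
  Submodule.mapQ I₂ I₂ (TensorProduct.map (indH φ) (indH φ))
    (Submodule.map_le_iff_le_comap.mp hφ)

/-! Both sides are linear in `[g]`, and the classes `[g]` span `H`, so it suffices to compare them
on `[g]`. There, with `|φ ∘ ψ|_W = |φ|_W ∘ |ψ|_W` and `|φ|⁻¹ [g] = [φ⁻¹ g]`, the defining formulas
telescope: `θ₂ g - |φψ|_W θ₂(ψ⁻¹φ⁻¹g) = (θ₂ g - |φ|_W θ₂(φ⁻¹g)) + |φ|_W (θ₂(φ⁻¹g) - |ψ|_W θ₂(ψ⁻¹φ⁻¹g))`. -/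

theorem HH.linearMap_ext {π : Type*} [Group π] {M : Type*} [AddCommGroup M] [Module ℝ M]
    {f g : HH π →ₗ[ℝ] M} (h : ∀ x : π, f (cl x) = g (cl x)) : f = g := by
  refine TensorProduct.AlgebraTensorModule.ext fun r a => ?_
  induction a using Additive.rec with | _ a => ?_
  obtain ⟨x, rfl⟩ : ∃ x : π, Abelianization.of x = a := QuotientGroup.mk_surjective a
  have hr : (r ⊗ₜ[ℤ] Additive.ofMul (Abelianization.of x) : HH π) = r • cl x := by
    rw [cl, TensorProduct.smul_tmul', smul_eq_mul, mul_one]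
  rw [hr, map_smul, map_smul, h]

theorem indH_cl {π : Type*} [Group π] (φ : MulAut π) (g : π) :
    indH φ (cl g) = cl (φ g) := by
  simp [indH, cl]

theorem indH_mul {π : Type*} [Group π] (φ ψ : MulAut π) :
    indH (φ * ψ) = indH φ ∘ₗ indH ψ :=
  HH.linearMap_ext fun g => by simp [indH_cl]

theorem indW_mul {π : Type*} [Group π] (I₂ : Submodule ℝ (HH π ⊗[ℝ] HH π)) (φ ψ : MulAut π)
    (hφ : Submodule.map (TensorProduct.map (indH φ) (indH φ)) I₂ ≤ I₂)
    (hψ : Submodule.map (TensorProduct.map (indH ψ) (indH ψ)) I₂ ≤ I₂)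
    (hφψ : Submodule.map (TensorProduct.map (indH (φ * ψ)) (indH (φ * ψ))) I₂ ≤ I₂) :
    indW I₂ (φ * ψ) hφψ = indW I₂ φ hφ ∘ₗ indW I₂ ψ hψ := by
  simp only [indW, indH_mul, TensorProduct.map_comp]
  exact Submodule.mapQ_comp ..

theorem statement9_general {π : Type*} [Group π] (I₂ : Submodule ℝ (HH π ⊗[ℝ] HH π))
    (θ₂ : π → (HH π ⊗[ℝ] HH π) ⧸ I₂)
    (φ ψ : MulAut π)
    (hφ : Submodule.map (TensorProduct.map (indH φ) (indH φ)) I₂ ≤ I₂)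
    (hψ : Submodule.map (TensorProduct.map (indH ψ) (indH ψ)) I₂ ≤ I₂)
    (hφψ : Submodule.map (TensorProduct.map (indH (φ * ψ)) (indH (φ * ψ))) I₂ ≤ I₂)
    (τφ τψ τφψ : HH π →ₗ[ℝ] ((HH π ⊗[ℝ] HH π) ⧸ I₂))
    (hτφ : ∀ g : π, τφ (cl g) = θ₂ g - indW I₂ φ hφ (θ₂ (φ⁻¹ g)))
    (hτψ : ∀ g : π, τψ (cl g) = θ₂ g - indW I₂ ψ hψ (θ₂ (ψ⁻¹ g)))
    (hτφψ : ∀ g : π, τφψ (cl g) = θ₂ g - indW I₂ (φ * ψ) hφψ (θ₂ ((φ * ψ)⁻¹ g))) :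
    τφψ = τφ + (indW I₂ φ hφ).comp (τψ.comp (indH φ⁻¹)) := by
  refine HH.linearMap_ext fun g => ?_
  have hinv : (φ * ψ)⁻¹ g = ψ⁻¹ (φ⁻¹ g) := rfl
  simp only [LinearMap.add_apply, LinearMap.comp_apply, indH_cl, hτφψ, hτφ, hτψ, hinv,
    indW_mul I₂ φ ψ hφ hψ hφψ, map_sub]
  abel

/-- `τ₁^θ` is a 1-cocycle (crossed homomorphism): for `I₂`-preserving
automorphisms `φ, ψ` (with `φ⁻¹` also preserving `I₂`, so `|φ|⁻¹ = |φ⁻¹|`),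
`τ₁^θ(φ ∘ ψ) = τ₁^θ(φ) + |φ|_W ∘ τ₁^θ(ψ) ∘ |φ|⁻¹` as linear maps `H → W`.
(Here `φ * ψ` is the composite automorphism `φ ∘ ψ`; the hypothesis `hφψ` that it preserves
`I₂` is automatic from `hφ` and `hψ`.  Each `τ₁^θ(χ)` is specified by its defining property
`τ₁^θ(χ) [g] = θ₂ g − |χ|_W (θ₂ (χ⁻¹ g))`, which determines it uniquely.) -/
theorem statement9 {π : Type*} [Group π] (I₂ : Submodule ℝ (HH π ⊗[ℝ] HH π))
    (θ₂ : π → (HH π ⊗[ℝ] HH π) ⧸ I₂)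
    (hθ : ∀ g h : π, θ₂ (g * h) = θ₂ g + θ₂ h + I₂.mkQ (cl g ⊗ₜ[ℝ] cl h))
    (φ ψ : MulAut π)
    (hφ : Submodule.map (TensorProduct.map (indH φ) (indH φ)) I₂ ≤ I₂)
    (hψ : Submodule.map (TensorProduct.map (indH ψ) (indH ψ)) I₂ ≤ I₂)
    (hφinv : Submodule.map (TensorProduct.map (indH φ⁻¹) (indH φ⁻¹)) I₂ ≤ I₂)
    (hφψ : Submodule.map (TensorProduct.map (indH (φ * ψ)) (indH (φ * ψ))) I₂ ≤ I₂)
    (τφ τψ τφψ : HH π →ₗ[ℝ] ((HH π ⊗[ℝ] HH π) ⧸ I₂))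
    (hτφ : ∀ g : π, τφ (cl g) = θ₂ g - indW I₂ φ hφ (θ₂ (φ⁻¹ g)))
    (hτψ : ∀ g : π, τψ (cl g) = θ₂ g - indW I₂ ψ hψ (θ₂ (ψ⁻¹ g)))
    (hτφψ : ∀ g : π, τφψ (cl g) = θ₂ g - indW I₂ (φ * ψ) hφψ (θ₂ ((φ * ψ)⁻¹ g))) :
    τφψ = τφ + (indW I₂ φ hφ).comp (τψ.comp (indH φ⁻¹)) :=
  statement9_general I₂ θ₂ φ ψ hφ hψ hφψ τφ τψ τφψ hτφ hτψ hτφψ
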